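/- arXiv:2511.19167 — 8 statements merged into one kernel-verified Lean document; each statement's English description precedes it below -/
import Mathlib

section
/- Let h < 0 be a real number and λ ∈ ℂ with h²·Re(λ) < −(Im λ)². Then the polynomial p(σ) = σ² − hσ − λ has no complex root σ with Re(σ) > 0. -/
theorem stmt_0 (h : ℝ) (lam : ℂ) (hh : h < 0)
    (hlam : h ^ 2 * lam.re < -(lam.im) ^ 2) :
    ∀ σ : ℂ, σ ^ 2 - (h : ℂ) * σ - lam = 0 → ¬ (0 < σ.re) := by
  intro σ hroot hpos
  have hl : lam = σ ^ 2 - (h : ℂ) * σ := by linear_combination -hroot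
  have hre : lam.re = σ.re ^ 2 - σ.im ^ 2 - h * σ.re := by
    rw [hl]; simp [Complex.sub_re, pow_two, Complex.mul_re]
  have him : lam.im = 2 * σ.re * σ.im - h * σ.im := by
    rw [hl]; simp [Complex.sub_im, pow_two, Complex.mul_im]; ring
  rw [hre, him] at hlam
  nlinarith [sq_nonneg σ.im, mul_pos hpos (sub_pos.mpr (lt_trans hh hpos)), sq_nonneg (σ.im * (2 * σ.re - h)), mul_pos hpos hpos]
end

section
/- Let h < 0 be a real number and λ ∈ ℂ with h²·Re(λ) > −(Im λ)². Then the polynomial p(σ) = σ² − hσ − λ has exactly one complex root σ (counted without multiplicity among the two roots) with Re(σ) > 0. -/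
theorem stmt_1 (h : ℝ) (lam : ℂ) (hh : h < 0)
    (hlam : h ^ 2 * lam.re > -(lam.im) ^ 2) :
    ∃! σ : ℂ, σ ^ 2 - (h : ℂ) * σ - lam = 0 ∧ 0 < σ.re := by
  -- take a square root of the discriminant
  obtain ⟨w, hw⟩ : ∃ w : ℂ, w ^ 2 = (h:ℂ)^2 + 4*lam :=
    IsAlgClosed.exists_pow_nat_eq _ (by norm_num)
  have hre : w.re^2 - w.im^2 = h^2 + 4*lam.re := by
    have := congrArg Complex.re hw
    simpa [pow_two, Complex.mul_re, Complex.add_re, Complex.mul_im] using this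
  have him : lam.im = w.re * w.im / 2 := by
    have h0 := congrArg Complex.im hw
    simp [pow_two, Complex.mul_im, Complex.add_im, Complex.mul_re] at h0
    linarith
  rw [him] at hlam
  have key : h^2 < w.re^2 := by
    nlinarith [sq_nonneg w.im, sq_nonneg h, sq_nonneg w.re]
  -- choose the square root with nonnegative real part
  set s : ℂ := if 0 ≤ w.re then w else -w with hs_def
  have hs : s^2 = (h:ℂ)^2 + 4*lam := by
    by_cases hc : 0 ≤ w.re <;> simp [hs_def, hc, hw, neg_pow]
  have hsre : -h < s.re := by
    by_cases hc : 0 ≤ w.re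
    · have : -h < w.re := by nlinarith
      simpa [hs_def, hc]
    · push_neg at hc
      have : -h < -w.re := by nlinarith
      simpa [hs_def, hc, not_le.mpr hc]
  clear_value s
  set σ : ℂ := ((h:ℂ) + s) / (2:ℝ) with hσ_def
  clear_value σ
  have hσre : σ.re = (h + s.re)/2 := by
    simp [hσ_def, Complex.div_ofReal_re]
  have hσeq : σ^2 - (h:ℂ)*σ - lam = 0 := by
    rw [hσ_def]
    push_cast
    linear_combination hs/4
  refine ⟨σ, ⟨hσeq, ?_⟩, ?_⟩
  · rw [hσre]; linarith
  · rintro τ ⟨hτ, hτre⟩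
    have hfact : (τ - σ) * (τ + σ - h) = 0 := by
      linear_combination hτ - hσeq
    rcases mul_eq_zero.mp hfact with h1 | h1
    · exact sub_eq_zero.mp h1
    · exfalso
      have := congrArg Complex.re h1
      simp [Complex.add_re, Complex.sub_re] at this
      rw [hσre] at this
      linarith
end

section
/- Let h > 0 be a real number and λ ∈ ℂ with h²·Re(λ) < −(Im λ)². Then both complex roots of p(σ) = σ² − hσ − λ have Re(σ) > 0. -/
theorem stmt_2 (h : ℝ) (lam : ℂ) (hh : 0 < h)
    (hlam : h ^ 2 * lam.re < -(lam.im) ^ 2) :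
    ∀ σ : ℂ, σ ^ 2 - (h : ℂ) * σ - lam = 0 → 0 < σ.re := by
  intro σ hσ
  have hl : lam = σ ^ 2 - (h : ℂ) * σ := by linear_combination -hσ
  have hre : lam.re = σ.re ^ 2 - σ.im ^ 2 - h * σ.re := by
    rw [hl]; simp [pow_two, Complex.mul_re]
  have him : lam.im = 2 * σ.re * σ.im - h * σ.im := by
    rw [hl]; simp [pow_two, Complex.mul_im]; ring
  rw [hre, him] at hlam
  by_contra hx
  push_neg at hx
  nlinarith [mul_nonneg (mul_nonneg (neg_nonneg.2 hx) (by linarith : (0:ℝ) ≤ h - σ.re))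
      (by positivity : (0:ℝ) ≤ h ^ 2 + 4 * σ.im ^ 2), sq_nonneg σ.im]
end

section
/- Let h > 0 be a real number and λ ∈ ℂ with h²·Re(λ) < −(Im λ)². Then p(σ) = σ² − hσ − λ has no root with Re(σ) < 0. -/
theorem stmt_3 (h : ℝ) (lam : ℂ) (hh : 0 < h)
    (hlam : h ^ 2 * lam.re < -(lam.im) ^ 2) :
    ∀ σ : ℂ, σ ^ 2 - (h : ℂ) * σ - lam = 0 → ¬ (σ.re < 0) := by
  intro σ hσ hre
  have hl : lam = σ ^ 2 - (h : ℂ) * σ := by linear_combination -hσ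
  rw [hl] at hlam
  simp [Complex.sub_re, Complex.sub_im, Complex.mul_re, Complex.mul_im, pow_two,
    Complex.ofReal_re, Complex.ofReal_im] at hlam
  nlinarith [sq_nonneg σ.im, sq_nonneg (σ.im * (2 * σ.re - h)),
    mul_pos (mul_pos hh hh) (mul_pos (neg_pos.mpr hre) (by linarith : (0:ℝ) < h - σ.re)),
    mul_nonneg (mul_nonneg (sq_nonneg σ.im) (le_of_lt (neg_pos.mpr hre))) (le_of_lt hh)]
end

section
/- Let h ∈ ℝ, h ≠ 0, and λ ∈ ℂ with Re(λ) ≥ 0 and λ ≠ 0. Then the quadratic equation σ² − hσ − λ = 0 has exactly one root with Re(σ) > 0 and exactly one root with Re(σ) < 0; in particular no root lies on the imaginary axis. -/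
theorem stmt_4 (h : ℝ) (lam : ℂ) (hh : h ≠ 0) (hre : 0 ≤ lam.re) (hne : lam ≠ 0) :
    (∃! σ : ℂ, σ ^ 2 - (h : ℂ) * σ - lam = 0 ∧ 0 < σ.re) ∧
    (∃! σ : ℂ, σ ^ 2 - (h : ℂ) * σ - lam = 0 ∧ σ.re < 0) ∧
    (∀ σ : ℂ, σ ^ 2 - (h : ℂ) * σ - lam = 0 → σ.re ≠ 0) := by
  obtain ⟨s0, hs0⟩ := IsAlgClosed.exists_pow_nat_eq ((h : ℂ) ^ 2 + 4 * lam) zero_lt_two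
  -- key: s0.re ^ 2 > h ^ 2
  have hre2 : (s0.re) ^ 2 = h ^ 2 + 4 * lam.re + (s0.im) ^ 2 := by
    have := congrArg Complex.re hs0
    simp [pow_two, Complex.mul_re] at this
    nlinarith [this]
  have him2 : 2 * s0.re * s0.im = 4 * lam.im := by
    have := congrArg Complex.im hs0
    simp [pow_two, Complex.mul_im] at this
    nlinarith [this]
  have hgt : h ^ 2 < s0.re ^ 2 := by
    rcases lt_or_eq_of_le hre with hpos | hzero
    · nlinarith [sq_nonneg s0.im]
    · -- lam.re = 0; then lam.im ≠ 0
      have himne : lam.im ≠ 0 := by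
        intro h0
        exact hne (Complex.ext (by simp [← hzero]) (by simp [h0]))
      have hsim : s0.im ≠ 0 := by
        intro h0
        rw [h0] at him2
        simp at him2
        exact himne (by linarith)
      nlinarith [sq_nonneg s0.im, pow_pos (abs_pos.mpr hsim) 2, sq_abs s0.im]
  -- choose s with s.re > |h|
  obtain ⟨s, hs, hsre⟩ : ∃ s : ℂ, s ^ 2 = (h : ℂ) ^ 2 + 4 * lam ∧ |h| < s.re := by
    rcases lt_or_ge 0 s0.re with hp | hp
    · exact ⟨s0, hs0, by rw [abs_lt]; constructor <;> nlinarith⟩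
    · refine ⟨-s0, by rw [neg_pow]; simpa using hs0, ?_⟩
      simp only [Complex.neg_re]
      rw [abs_lt]; constructor <;> nlinarith
  set r₁ : ℂ := ((h : ℂ) + s) / 2 with hr₁
  set r₂ : ℂ := ((h : ℂ) - s) / 2 with hr₂
  have habs := abs_lt.mp hsre
  have hr₁re : 0 < r₁.re := by
    simp [hr₁, Complex.add_re, Complex.div_re]
    nlinarith [habs.1, habs.2]
  have hr₂re : r₂.re < 0 := by
    simp [hr₂, Complex.sub_re, Complex.div_re]
    nlinarith [habs.1, habs.2]
  have hfac : ∀ σ : ℂ, σ ^ 2 - (h : ℂ) * σ - lam = (σ - r₁) * (σ - r₂) := by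
    intro σ
    rw [hr₁, hr₂]
    linear_combination (1/4 : ℂ) * hs
  have hroot : ∀ σ : ℂ, σ ^ 2 - (h : ℂ) * σ - lam = 0 ↔ σ = r₁ ∨ σ = r₂ := by
    intro σ
    rw [hfac σ, mul_eq_zero, sub_eq_zero, sub_eq_zero]
  have hroot₁ : r₁ ^ 2 - (h : ℂ) * r₁ - lam = 0 := (hroot r₁).mpr (Or.inl rfl)
  have hroot₂ : r₂ ^ 2 - (h : ℂ) * r₂ - lam = 0 := (hroot r₂).mpr (Or.inr rfl)
  refine ⟨⟨r₁, ⟨hroot₁, hr₁re⟩, ?_⟩, ⟨r₂, ⟨hroot₂, hr₂re⟩, ?_⟩, ?_⟩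
  · rintro σ ⟨heq, hpos⟩
    rcases (hroot σ).mp heq with rfl | rfl
    · rfl
    · linarith
  · rintro σ ⟨heq, hneg⟩
    rcases (hroot σ).mp heq with rfl | rfl
    · linarith
    · rfl
  · intro σ heq
    rcases (hroot σ).mp heq with rfl | rfl
    · linarith
    · linarith
end

section
/- Let Q⁻ = [[a₋, c₋],[c₋, b₋]] and Q⁺ = [[a₊, c₊],[c₊, b₊]] be real symmetric 2×2 matrices, and let S = [[1, α],[0, β]] where α, β are given by β = (s c₊ − b₊ u₂⁺ − c₊ u₁⁺)/f̂₂⁻ and α = (s(a₊ − a₋) + a₋u₁⁻ − a₊u₁⁺ + c₋u₂⁻ − c₊u₂⁺)/f̂₂⁻, with f̂₂⁻ = (s − u₁⁻)c₋ − b₋u₂⁻. Then f̂₂⁻ · det(Q⁺ − S Q⁻) = A₁(u₁⁺ − u₁⁻) + A₂(u₂⁺ − u₂⁻), where A₁ = c₋ det Q⁺ − c₊ det Q⁻ and A₂ = b₋ det Q⁺ − b₊ det Q⁻; in particular the left-hand side is independent of s. -/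
theorem stmt_9 (am bm cm ap bp cp u1m u2m u1p u2p s α β f2m : ℝ)
    (hf2m : f2m = (s - u1m) * cm - bm * u2m) (hf2ne : f2m ≠ 0)
    (hu2m : u2m < 0) (hu2p : 0 < u2p)
    (hβ : β = (s * cp - bp * u2p - cp * u1p) / f2m)
    (hα : α = (s * (ap - am) + am * u1m - ap * u1p + cm * u2m - cp * u2p) / f2m)
    (Qm Qp S : Matrix (Fin 2) (Fin 2) ℝ)
    (hQm : Qm = !![am, cm; cm, bm]) (hQp : Qp = !![ap, cp; cp, bp])
    (hS : S = !![1, α; 0, β])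
    (A1 A2 : ℝ)
    (hA1 : A1 = cm * Qp.det - cp * Qm.det)
    (hA2 : A2 = bm * Qp.det - bp * Qm.det) :
    f2m * (Qp - S * Qm).det = A1 * (u1p - u1m) + A2 * (u2p - u2m) := by
  subst hQm hQp hS hA1 hA2 hβ hα
  simp [Matrix.det_fin_two, Matrix.mul_apply, Fin.sum_univ_two]
  field_simp
  subst hf2m
  ring
end

section
/- Let F, G : {λ ∈ ℂ : Re λ ≥ 0} → ℂ be functions analytic near 0 with F(0) = 0, F'(0) < 0 real, and G(0) > 0 real, and with F, G real-valued on the nonnegative real axis. Then for all sufficiently large s > 0 the equation s F(λ) + G(λ) = 0 has a real solution λ(s) = −G(0)/(s F'(0)) + O(s⁻²) > 0. -/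
/-!
On the positive real axis `s F(x) + G(x) = s F'(0) x + G(0) + O(s x² + x)`. Put `c = -G(0)/F'(0)`
and consider the interval of radius `C / s²` about `c / s`. There the remainder is `O(1 / s)`,
while the linear part `s F'(0) (x - c / s)` takes the values `± (-F'(0)) C / s` at the endpoints;
for `C` large it dominates, so `s Re F + Re G` changes sign on the interval and has a root there
by the intermediate value theorem. As `F` and `G` are real on the positive axis, the root solves
the complex equation.
-/

open Filter Topology Asymptotics Set

section

variable {𝕜 E : Type*} [NontriviallyNormedField 𝕜] [NormedAddCommGroup E] [NormedSpace 𝕜 E]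
  {f : 𝕜 → E} {x : 𝕜}

theorem AnalyticAt.dslope (hf : AnalyticAt 𝕜 f x) : AnalyticAt 𝕜 (dslope f x) x :=
  let ⟨p, hp⟩ := hf
  ⟨p.fslope, hp.has_fpower_series_dslope_fslope⟩

/-- The remainder is `(z - x) • (dslope f x z - dslope f x x)`, and `dslope f x` is analytic. -/
theorem AnalyticAt.isBigO_sub_sub_smul_deriv (hf : AnalyticAt 𝕜 f x) :
    (fun z => f z - f x - (z - x) • deriv f x) =O[𝓝 x] fun z => (z - x) ^ 2 := by
  have hd : (fun z => _root_.dslope f x z - _root_.dslope f x x) =O[𝓝 x] (· - x) :=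
    hf.dslope.differentiableAt.hasDerivAt.isBigO_sub
  refine ((isBigO_refl (· - x) (𝓝 x)).smul hd).congr (fun z => ?_) (fun z => ?_)
  · rw [smul_sub, sub_smul_dslope, dslope_same]
  · rw [smul_eq_mul, sq]

end

theorem Complex.tendsto_ofReal_nhds_zero : Tendsto ((↑) : ℝ → ℂ) (𝓝 0) (𝓝 0) :=
  continuous_ofReal.tendsto' 0 0 ofReal_zero

section

variable {F : ℂ → ℂ}

theorem AnalyticAt.re_ofReal_sub_isBigO_sq (hF : AnalyticAt ℂ F 0) :
    (fun x : ℝ => (F x).re - (F 0).re - (deriv F 0).re * x) =O[𝓝 0] (· ^ 2) := by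
  refine IsBigO.trans ?_ ((hF.isBigO_sub_sub_smul_deriv.comp_tendsto Complex.tendsto_ofReal_nhds_zero).trans ?_)
  · refine isBigO_of_le _ fun x => ?_
    simpa [mul_comm] using Complex.abs_re_le_norm (F x - F 0 - x * deriv F 0)
  · exact isBigO_of_le _ fun x => by simp

theorem DifferentiableAt.re_ofReal_sub_isBigO (hF : DifferentiableAt ℂ F 0) :
    (fun x : ℝ => (F x).re - (F 0).re) =O[𝓝 0] id := by
  refine IsBigO.trans ?_ ((hF.hasDerivAt.isBigO_sub.comp_tendsto Complex.tendsto_ofReal_nhds_zero).trans ?_)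
  · refine isBigO_of_le _ fun x => ?_
    simpa using Complex.abs_re_le_norm (F x - F 0)
  · exact isBigO_of_le _ fun x => by simp

theorem AnalyticAt.eventually_continuousAt_re_ofReal (hF : AnalyticAt ℂ F 0) :
    ∀ᶠ x : ℝ in 𝓝 0, ContinuousAt (fun y : ℝ => (F y).re) x := by
  filter_upwards [Complex.tendsto_ofReal_nhds_zero.eventually hF.eventually_analyticAt] with x hx
  exact Complex.continuous_re.continuousAt.comp
    (hx.continuousAt.comp Complex.continuous_ofReal.continuousAt)

end

theorem exists_zero_of_abs_sub_linear_le {h : ℝ → ℝ} {x₀ r m : ℝ} (hr : 0 ≤ r)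
    (hc : ContinuousOn h (Icc (x₀ - r) (x₀ + r)))
    (hlin : ∀ x ∈ Icc (x₀ - r) (x₀ + r), |h x - m * (x - x₀)| ≤ -m * r) :
    ∃ l, |l - x₀| ≤ r ∧ h l = 0 := by
  have hle : x₀ - r ≤ x₀ + r := by linarith
  have hlo := (abs_le.mp (hlin _ (left_mem_Icc.mpr hle))).1
  have hhi := (abs_le.mp (hlin _ (right_mem_Icc.mpr hle))).2
  obtain ⟨l, hl, hl0⟩ := intermediate_value_Icc' hle hc
    (show (0 : ℝ) ∈ Icc (h (x₀ + r)) (h (x₀ - r)) from ⟨by linarith, by linarith⟩)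
  exact ⟨l, by rwa [abs_sub_comm, mem_Icc_iff_abs_le], hl0⟩

theorem abs_mul_add_sub_linear_le {f g : ℝ → ℝ} {a b s M K x ρ : ℝ} (hs : 0 ≤ s)
    (hM : 0 ≤ M) (hK : 0 ≤ K) (hf : |f x - a * x| ≤ M * x ^ 2) (hg : |g x - b| ≤ K * |x|)
    (hx : |x| ≤ ρ) :
    |s * f x + g x - (s * a * x + b)| ≤ s * M * ρ ^ 2 + K * ρ := by
  have hx2 : x ^ 2 ≤ ρ ^ 2 := sq_le_sq' (abs_le.mp hx).1 (abs_le.mp hx).2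
  calc |s * f x + g x - (s * a * x + b)|
      = |s * (f x - a * x) + (g x - b)| := by ring_nf
    _ ≤ s * (M * x ^ 2) + K * |x| := by
        refine (abs_add_le _ _).trans (add_le_add ?_ hg)
        rw [abs_mul, abs_of_nonneg hs]
        exact mul_le_mul_of_nonneg_left hf hs
    _ ≤ s * M * ρ ^ 2 + K * ρ := by
        rw [← mul_assoc]; gcongr

theorem exists_pos_root_near_of_isBigO {f g : ℝ → ℝ} {a b : ℝ} (ha : a < 0) (hb : 0 < b)
    (hf : (fun x => f x - a * x) =O[𝓝 0] (· ^ 2)) (hg : (fun x => g x - b) =O[𝓝 0] id)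
    (hfc : ∀ᶠ x in 𝓝 0, ContinuousAt f x) (hgc : ∀ᶠ x in 𝓝 0, ContinuousAt g x) :
    ∃ C > 0, ∃ s₀ > 0, ∀ s : ℝ, s₀ < s →
      ∃ l : ℝ, 0 < l ∧ s * f l + g l = 0 ∧ |l - (-b / (s * a))| ≤ C / s ^ 2 := by
  obtain ⟨M, hM, hMf⟩ := hf.exists_pos
  obtain ⟨K, hK, hKg⟩ := hg.exists_pos
  obtain ⟨δ, hδ, hnear⟩ := Metric.eventually_nhds_iff.mp
    ((hMf.bound.and hKg.bound).and (hfc.and hgc))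
  have ha0 : a ≠ 0 := ha.ne
  set c := b / -a with hc_def
  have hc : 0 < c := div_pos hb (neg_pos.mpr ha)
  set C := (4 * M * c ^ 2 + 2 * K * c) / -a with hC_def
  have hC : 0 < C := div_pos (by positivity) (neg_pos.mpr ha)
  refine ⟨C, hC, max (C / c) (2 * c / δ), lt_max_of_lt_left (div_pos hC hc), fun s hs₀ => ?_⟩
  have hs : 0 < s := (div_pos hC hc).trans ((le_max_left _ _).trans_lt hs₀)
  have hCs : C / s ^ 2 < c / s := by
    have := (le_max_left _ _).trans_lt hs₀
    rw [div_lt_iff₀ hc] at this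
    rw [div_lt_div_iff₀ (by positivity) hs]
    nlinarith
  have hδs : 2 * c / s < δ := by
    have := (le_max_right _ _).trans_lt hs₀
    rw [div_lt_iff₀ hδ] at this
    rw [div_lt_iff₀ hs]
    linarith
  have hx₀ : -b / (s * a) = c / s := by
    rw [hc_def]; field_simp
  set I := Icc (c / s - C / s ^ 2) (c / s + C / s ^ 2)
  have hsmall : ∀ x ∈ I, |x| ≤ 2 * c / s := by
    rintro x ⟨hlo, hhi⟩
    rw [abs_le]
    constructor <;> linarith [div_pos hc hs, show 2 * c / s = c / s + c / s by ring]
  have hnearI : ∀ x ∈ I, _ := fun x hx => hnear (by simpa using (hsmall x hx).trans_lt hδs)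
  have hcont : ContinuousOn (fun x => s * f x + g x) I := fun x hx =>
    ((continuousAt_const.mul (hnearI x hx).2.1).add (hnearI x hx).2.2).continuousWithinAt
  have hlin : ∀ x ∈ I, |s * f x + g x - s * a * (x - c / s)| ≤ -(s * a) * (C / s ^ 2) := by
    intro x hx
    obtain ⟨⟨hfx, hgx⟩, -⟩ := hnearI x hx
    simp only [norm_pow, Real.norm_eq_abs, sq_abs, id] at hfx hgx
    convert abs_mul_add_sub_linear_le hs.le hM.le hK.le hfx hgx (hsmall x hx) using 2
    · rw [hc_def]; field_simp; ring
    · rw [hC_def]; field_simp; ring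
  obtain ⟨l, hl, hl0⟩ := exists_zero_of_abs_sub_linear_le (by positivity) hcont hlin
  refine ⟨l, ?_, hl0, hx₀ ▸ hl⟩
  linarith [(abs_le.mp hl).1]

theorem stmt_13_general (F G : ℂ → ℂ)
    (hF : AnalyticAt ℂ F 0) (hG : AnalyticAt ℂ G 0)
    (hF0 : F 0 = 0)
    (hF'neg : (deriv F 0).re < 0)
    (hG0pos : 0 < (G 0).re)
    (hFreal : ∀ x : ℝ, 0 ≤ x → (F x).im = 0)
    (hGreal : ∀ x : ℝ, 0 ≤ x → (G x).im = 0) :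
    ∃ C > 0, ∃ s₀ > 0, ∀ s : ℝ, s₀ < s →
      ∃ l : ℝ, 0 < l ∧ (s : ℂ) * F l + G l = 0 ∧
        |l - (-(G 0).re / (s * (deriv F 0).re))| ≤ C / s ^ 2 := by
  have hFre := hF.re_ofReal_sub_isBigO_sq
  simp only [hF0, Complex.zero_re, sub_zero] at hFre
  obtain ⟨C, hC, s₀, hs₀, hroots⟩ := exists_pos_root_near_of_isBigO hF'neg hG0pos hFre
    hG.differentiableAt.re_ofReal_sub_isBigO hF.eventually_continuousAt_re_ofReal
    hG.eventually_continuousAt_re_ofReal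
  refine ⟨C, hC, s₀, hs₀, fun s hs => ?_⟩
  obtain ⟨l, hl, hroot, hnear⟩ := hroots s hs
  refine ⟨l, hl, Complex.ext ?_ ?_, hnear⟩
  · simpa using hroot
  · simp [hFreal l hl.le, hGreal l hl.le]

theorem stmt_13 (F G : ℂ → ℂ)
    (hF : AnalyticAt ℂ F 0) (hG : AnalyticAt ℂ G 0)
    (hF0 : F 0 = 0)
    (hF' : (deriv F 0).im = 0) (hF'neg : (deriv F 0).re < 0)
    (hG0im : (G 0).im = 0) (hG0pos : 0 < (G 0).re)
    (hFreal : ∀ x : ℝ, 0 ≤ x → (F x).im = 0)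
    (hGreal : ∀ x : ℝ, 0 ≤ x → (G x).im = 0) :
    ∃ C > 0, ∃ s₀ > 0, ∀ s : ℝ, s₀ < s →
      ∃ l : ℝ, 0 < l ∧ (s : ℂ) * F l + G l = 0 ∧
        |l - (-(G 0).re / (s * (deriv F 0).re))| ≤ C / s ^ 2 :=
  stmt_13_general F G hF hG hF0 hF'neg hG0pos hFreal hGreal
end

section
/- Let Q be a real symmetric n×n matrix with all eigenvalues nonzero, and λ ∈ ℂ with Re λ ≥ 0, λ ≠ 0. Then there exists a unique matrix P (over ℂ) that is diagonalized in the same orthonormal eigenbasis as Q, satisfies P² − PQ − λI = 0, and all of whose eigenvalues σ satisfy Re σ > 0. Its eigenvalues are σ_j = (h_j + sqrt(h_j² + 4λ))/2 where h_j are the eigenvalues of Q and sqrt is the principal branch. -/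
/-!
Conjugation by the orthogonal matrix `T` makes `σ ↦ Tᵀ diag(σ) T` an injective algebra
homomorphism, so for `P = Tᵀ diag(σ) T` the equation `P² - PQ - λ = 0` holds iff
`σ_j² - h_j σ_j - λ = 0` for every `j`. For real `a`, `Re λ ≥ 0` and `λ ≠ 0`, the principal
square root `s` of `a² + 4λ` has `Re s > |a|`, so of the two roots `(a ± s)/2` of
`σ² - aσ - λ` exactly `(a + s)/2` has positive real part.
-/

open Matrix

namespace Matrix

variable {n R S : Type*} [Fintype n] [DecidableEq n]

theorem map_transpose_mul_diagonal_mul [Semiring R] [Semiring S] (f : R →+* S)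
    (T : Matrix n n R) (d : n → R) :
    (Tᵀ * diagonal d * T).map f = (T.map f)ᵀ * diagonal (fun j => f (d j)) * T.map f := by
  simp [Matrix.map_mul, transpose_map, diagonal_map]

theorem map_mul_transpose_map_eq_one [Semiring R] [Semiring S] (f : R →+* S)
    {T : Matrix n n R} (hT : T * Tᵀ = 1) : T.map f * (T.map f)ᵀ = 1 := by
  rw [← transpose_map, ← Matrix.map_mul, hT, Matrix.map_one f f.map_zero f.map_one]

section CommSemiring

variable [CommSemiring R]

def conjDiagonalAlgHom (U : Matrix n n R) (hU : U * Uᵀ = 1) : (n → R) →ₐ[R] Matrix n n R :=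
  (MulSemiringAction.toAlgEquiv R (Matrix n n R)
    (ConjAct.toConjAct (⟨Uᵀ, U, mul_eq_one_comm.mp hU, hU⟩ : (Matrix n n R)ˣ))).toAlgHom.comp
    (diagonalAlgHom R)

variable {U : Matrix n n R} (hU : U * Uᵀ = 1)

theorem conjDiagonalAlgHom_apply (d : n → R) :
    conjDiagonalAlgHom U hU d = Uᵀ * diagonal d * U :=
  rfl

theorem conjDiagonalAlgHom_injective : Function.Injective (conjDiagonalAlgHom U hU) := by
  rw [conjDiagonalAlgHom, AlgHom.coe_comp]
  exact (AlgEquiv.injective _).comp diagonal_injective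

end CommSemiring

theorem conjDiagonalAlgHom_sq_sub_mul_sub_smul_eq_zero_iff [CommRing R] {U : Matrix n n R}
    (hU : U * Uᵀ = 1) (σ d : n → R) (c : R) :
    conjDiagonalAlgHom U hU σ ^ 2 - conjDiagonalAlgHom U hU σ * conjDiagonalAlgHom U hU d
        - c • 1 = 0 ↔ ∀ j, σ j ^ 2 - σ j * d j - c = 0 := by
  rw [← map_pow, ← map_mul, ← map_one (conjDiagonalAlgHom U hU), ← map_smul, ← map_sub,
    ← map_sub, map_eq_zero_iff _ (conjDiagonalAlgHom_injective hU), funext_iff]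
  simp

end Matrix

theorem Complex.cpow_one_half_sq (w : ℂ) : (w ^ ((1 : ℂ) / 2)) ^ 2 = w := by
  rw [one_div]; simp

theorem Complex.re_cpow_one_half_nonneg (w : ℂ) : 0 ≤ (w ^ ((1 : ℂ) / 2)).re := by
  rw [one_div, Complex.cpow_inv_two_re]; positivity

theorem abs_lt_re_of_sq_eq {a : ℝ} {lam s : ℂ} (hre : 0 ≤ lam.re) (hne : lam ≠ 0)
    (hs : 0 ≤ s.re) (hsq : s ^ 2 = (a : ℂ) ^ 2 + 4 * lam) : |a| < s.re := by
  have hsq_re : s.re ^ 2 - s.im ^ 2 = a ^ 2 + 4 * lam.re := by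
    simpa [sq] using congrArg Complex.re hsq
  have hsq_im : s.re * s.im + s.im * s.re = 4 * lam.im := by
    simpa [sq] using congrArg Complex.im hsq
  suffices |a| ^ 2 < s.re ^ 2 from abs_lt_of_sq_lt_sq' this hs |>.2
  rcases hre.lt_or_eq with hpos | hzero
  · nlinarith [sq_nonneg s.im, sq_abs a]
  · have him : lam.im ≠ 0 := fun h0 => hne (Complex.ext hzero.symm h0)
    have : s.im ≠ 0 := fun h0 => him (by simpa [h0] using hsq_im.symm)
    nlinarith [sq_abs a, pow_pos (abs_pos.mpr this) 2, sq_abs s.im]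

noncomputable def posQuadRoot (a : ℝ) (lam : ℂ) : ℂ :=
  ((a : ℂ) + ((a : ℂ) ^ 2 + 4 * lam) ^ ((1 : ℂ) / 2)) / 2

theorem posQuadRoot_isRoot (a : ℝ) (lam : ℂ) :
    posQuadRoot a lam ^ 2 - posQuadRoot a lam * a - lam = 0 := by
  unfold posQuadRoot
  linear_combination Complex.cpow_one_half_sq ((a : ℂ) ^ 2 + 4 * lam) / 4

section

variable (a : ℝ) {lam : ℂ} (hre : 0 ≤ lam.re) (hne : lam ≠ 0)
include hre hne

theorem abs_lt_re_sqrt_discrim : |a| < (((a : ℂ) ^ 2 + 4 * lam) ^ ((1 : ℂ) / 2)).re :=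
  abs_lt_re_of_sq_eq hre hne (Complex.re_cpow_one_half_nonneg _) (Complex.cpow_one_half_sq _)

theorem re_posQuadRoot_pos : 0 < (posQuadRoot a lam).re := by
  rw [posQuadRoot, Complex.div_ofNat_re, Complex.add_re, Complex.ofReal_re]
  linarith [neg_abs_le a, abs_lt_re_sqrt_discrim a hre hne]

theorem eq_posQuadRoot {τ : ℂ} (hτ : τ ^ 2 - τ * a - lam = 0) (hτre : 0 < τ.re) :
    τ = posQuadRoot a lam := by
  have hs := abs_lt_re_sqrt_discrim a hre hne
  set s := ((a : ℂ) ^ 2 + 4 * lam) ^ ((1 : ℂ) / 2)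
  have hfac : (τ - (a + s) / 2) * (τ - (a - s) / 2) = 0 := by
    linear_combination hτ - Complex.cpow_one_half_sq ((a : ℂ) ^ 2 + 4 * lam) / 4
  refine sub_eq_zero.mp ((mul_eq_zero.mp hfac).resolve_right fun h => ?_)
  have : τ.re = (a - s.re) / 2 := by simp [sub_eq_zero.mp h]
  linarith [le_abs_self a]
end

theorem stmt_16_general (n : ℕ) (Q T : Matrix (Fin n) (Fin n) ℝ) (h : Fin n → ℝ)
    (hT : T * Tᵀ = 1)
    (hdiag : Q = Tᵀ * Matrix.diagonal h * T)
    (lam : ℂ) (hre : 0 ≤ lam.re) (hne : lam ≠ 0)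
    (P₀ : Matrix (Fin n) (Fin n) ℂ)
    (hP₀ : P₀ = (T.map Complex.ofReal)ᵀ *
        Matrix.diagonal (fun j => ((h j : ℂ) + ((h j : ℂ) ^ 2 + 4 * lam) ^ ((1 : ℂ) / 2)) / 2) *
        T.map Complex.ofReal) :
    ((∃ σ : Fin n → ℂ, (∀ j, 0 < (σ j).re) ∧
        P₀ = (T.map Complex.ofReal)ᵀ * Matrix.diagonal σ * T.map Complex.ofReal) ∧
      P₀ ^ 2 - P₀ * Q.map Complex.ofReal - lam • 1 = 0) ∧
    ∀ P : Matrix (Fin n) (Fin n) ℂ,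
      ((∃ σ : Fin n → ℂ, (∀ j, 0 < (σ j).re) ∧
          P = (T.map Complex.ofReal)ᵀ * Matrix.diagonal σ * T.map Complex.ofReal) ∧
        P ^ 2 - P * Q.map Complex.ofReal - lam • 1 = 0) → P = P₀ := by
  have hU : T.map Complex.ofReal * (T.map Complex.ofReal)ᵀ = 1 :=
    map_mul_transpose_map_eq_one Complex.ofRealHom hT
  set φ := conjDiagonalAlgHom _ hU
  have hQ : Q.map Complex.ofReal = φ (fun j => (h j : ℂ)) := by
    rw [hdiag]; exact map_transpose_mul_diagonal_mul Complex.ofRealHom T h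
  have hP₀φ : P₀ = φ (fun j => posQuadRoot (h j) lam) := hP₀
  refine ⟨⟨⟨_, fun j => re_posQuadRoot_pos (h j) hre hne, hP₀⟩, ?_⟩, ?_⟩
  · rw [hP₀φ, hQ, conjDiagonalAlgHom_sq_sub_mul_sub_smul_eq_zero_iff]
    exact fun j => posQuadRoot_isRoot (h j) lam
  · rintro P ⟨⟨τ, hτ, rfl⟩, hP⟩
    rw [hQ, ← conjDiagonalAlgHom_apply hU, conjDiagonalAlgHom_sq_sub_mul_sub_smul_eq_zero_iff] at hP
    rw [hP₀φ, ← conjDiagonalAlgHom_apply hU]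
    congr 1
    exact funext fun j => eq_posQuadRoot (h j) hre hne (hP j) (hτ j)

theorem stmt_16 (n : ℕ) (Q T : Matrix (Fin n) (Fin n) ℝ) (h : Fin n → ℝ)
    (hQsymm : Q.IsSymm) (hT : T * Tᵀ = 1)
    (hdiag : Q = Tᵀ * Matrix.diagonal h * T)
    (hh : ∀ j, h j ≠ 0)
    (lam : ℂ) (hre : 0 ≤ lam.re) (hne : lam ≠ 0)
    (P₀ : Matrix (Fin n) (Fin n) ℂ)
    (hP₀ : P₀ = (T.map Complex.ofReal)ᵀ *
        Matrix.diagonal (fun j => ((h j : ℂ) + ((h j : ℂ) ^ 2 + 4 * lam) ^ ((1 : ℂ) / 2)) / 2) *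
        T.map Complex.ofReal) :
    ((∃ σ : Fin n → ℂ, (∀ j, 0 < (σ j).re) ∧
        P₀ = (T.map Complex.ofReal)ᵀ * Matrix.diagonal σ * T.map Complex.ofReal) ∧
      P₀ ^ 2 - P₀ * Q.map Complex.ofReal - lam • 1 = 0) ∧
    ∀ P : Matrix (Fin n) (Fin n) ℂ,
      ((∃ σ : Fin n → ℂ, (∀ j, 0 < (σ j).re) ∧
          P = (T.map Complex.ofReal)ᵀ * Matrix.diagonal σ * T.map Complex.ofReal) ∧
        P ^ 2 - P * Q.map Complex.ofReal - lam • 1 = 0) → P = P₀ :=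
  stmt_16_general n Q T h hT hdiag lam hre hne P₀ hP₀
end
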